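/- arXiv:2601.14462 — 4 statements merged into one kernel-verified Lean document; each statement's English description precedes it below -/
import Mathlib

section
/- Let q be a K-quasi-metric on a set S with 1 ≤ K ≤ 2 replaced by arbitrary K ≥ 1. Then there exists α > 0 and a metric d on S such that (1/C)·q(x,y)^α ≤ d(x,y) ≤ C·q(x,y)^α for all x,y ∈ S and some constant C ≥ 1; i.e., every quasi-metric space is snowflake-equivalent to a metric space. -/
/-!
Raising a `K`-quasi-metric to a small power `α` gives a `K ^ α`-quasi-metric, and once
`K ^ α * K ^ α ≤ 2` the snowflake `ρ = q ^ α` satisfies Frink's four-point inequality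
`ρ a d ≤ 2 * max (ρ a b) (ρ b c) (ρ c d)`. For such `ρ`, the infimum of chain sums
`ρ x₀ x₁ + ⋯ + ρ xₙ₋₁ xₙ` (Mathlib's `PseudoMetricSpace.ofPreNNDist`) is a metric lying between
`ρ / 2` and `ρ`.
-/

open scoped NNReal

theorem exists_pos_rpow_mul_self_le_two (K : ℝ≥0) : ∃ α : ℝ, 0 < α ∧ K ^ α * K ^ α ≤ 2 := by
  have hb : (1 : ℝ) < 2 + K := by linarith [K.2]
  have hpos := Real.logb_pos hb one_lt_two
  refine ⟨Real.logb (2 + K) 2 / 2, by positivity, ?_⟩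
  rw [← NNReal.rpow_add' (by positivity), add_halves, ← NNReal.coe_le_coe, NNReal.coe_rpow]
  calc (K : ℝ) ^ Real.logb (2 + K) 2 ≤ (2 + K) ^ Real.logb (2 + K) 2 := by gcongr; linarith
    _ = 2 := Real.rpow_logb (by positivity) hb.ne' two_pos

def QuasiTriangle {S : Type*} (K : ℝ≥0) (ρ : S → S → ℝ≥0) : Prop :=
  ∀ x y z, ρ x y ≤ K * max (ρ x z) (ρ z y)

namespace QuasiTriangle

variable {S : Type*} {K : ℝ≥0} {ρ : S → S → ℝ≥0}

theorem rpow (h : QuasiTriangle K ρ) {α : ℝ} (hα : 0 ≤ α) :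
    QuasiTriangle (K ^ α) fun x y => ρ x y ^ α := fun x y z =>
  calc ρ x y ^ α ≤ (K * max (ρ x z) (ρ z y)) ^ α := NNReal.rpow_le_rpow (h x y z) hα
    _ = K ^ α * max (ρ x z ^ α) (ρ z y ^ α) := by
      rw [NNReal.mul_rpow, (NNReal.monotone_rpow_of_nonneg hα).map_max]

theorem le_mul_self_mul_max (h : QuasiTriangle K ρ) (hK : 1 ≤ K) (a b c d : S) :
    ρ a d ≤ K * K * max (ρ a b) (max (ρ b c) (ρ c d)) :=
  calc ρ a d ≤ K * max (ρ a b) (K * max (ρ b c) (ρ c d)) := by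
        grw [h a d b, h b d c]
    _ ≤ K * (K * max (ρ a b) (max (ρ b c) (ρ c d))) := by
        gcongr
        exact max_le (le_mul_of_one_le_of_le hK (le_max_left _ _))
          (mul_le_mul_right (le_max_right _ _) K)
    _ = K * K * max (ρ a b) (max (ρ b c) (ρ c d)) := (mul_assoc _ _ _).symm

end QuasiTriangle

theorem exists_pseudometric_of_le_two_mul_max {S : Type*} (ρ : S → S → ℝ≥0)
    (hself : ∀ x, ρ x x = 0) (hcomm : ∀ x y, ρ x y = ρ y x)
    (h4 : ∀ a b c d, ρ a d ≤ 2 * max (ρ a b) (max (ρ b c) (ρ c d))) :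
    ∃ d : S → S → ℝ, (∀ x y, 0 ≤ d x y) ∧ (∀ x y, d x y = d y x) ∧
      (∀ x y z, d x z ≤ d x y + d y z) ∧ ∀ x y, ρ x y ≤ 2 * d x y ∧ d x y ≤ ρ x y := by
  let _ := PseudoMetricSpace.ofPreNNDist ρ hself hcomm
  exact ⟨dist, fun _ _ => dist_nonneg, dist_comm, dist_triangle, fun x y =>
    ⟨PseudoMetricSpace.le_two_mul_dist_ofPreNNDist ρ hself hcomm h4 x y,
      PseudoMetricSpace.dist_ofPreNNDist_le ρ hself hcomm x y⟩⟩

/-- Every `K`-quasi-metric space (arbitrary `K ≥ 1`) is snowflake equivalent to a metric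
space: there are `α > 0`, `C ≥ 1` and a metric `d` on `S` with
`(1/C)·q(x,y)^α ≤ d(x,y) ≤ C·q(x,y)^α` for all `x, y`. -/
theorem stmt1 {S : Type*} (q : S → S → ℝ) (K : ℝ) (hK : 1 ≤ K)
    (hq0 : ∀ x y, 0 ≤ q x y)
    (hqeq : ∀ x y, q x y = 0 ↔ x = y)
    (hqsymm : ∀ x y, q x y = q y x)
    (hqtri : ∀ x y z, q x y ≤ K * max (q x z) (q z y)) :
    ∃ (α C : ℝ) (d : S → S → ℝ), 0 < α ∧ 1 ≤ C ∧
      (∀ x y, 0 ≤ d x y) ∧ (∀ x y, d x y = 0 ↔ x = y) ∧ (∀ x y, d x y = d y x) ∧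
      (∀ x y z, d x z ≤ d x y + d y z) ∧
      ∀ x y, q x y ^ α / C ≤ d x y ∧ d x y ≤ C * q x y ^ α := by
  let K' : ℝ≥0 := ⟨K, by linarith⟩
  let q' : S → S → ℝ≥0 := fun x y => ⟨q x y, hq0 x y⟩
  have hq' : QuasiTriangle K' q' := fun x y z => by
    rw [← NNReal.coe_le_coe]
    exact hqtri x y z
  obtain ⟨α, hα, hKα⟩ := exists_pos_rpow_mul_self_le_two K'
  let ρ : S → S → ℝ≥0 := fun x y => q' x y ^ α
  have hρ : ∀ x y, (ρ x y : ℝ) = q x y ^ α := fun x y => NNReal.coe_rpow _ _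
  have hρ_eq_zero : ∀ x y, ρ x y = 0 ↔ x = y := fun x y => by
    rw [← NNReal.coe_eq_zero, hρ, Real.rpow_eq_zero (hq0 x y) hα.ne', hqeq]
  have hρcomm : ∀ x y, ρ x y = ρ y x := fun x y => NNReal.coe_inj.1 (by rw [hρ, hρ, hqsymm])
  have hρ4 : ∀ a b c d, ρ a d ≤ 2 * max (ρ a b) (max (ρ b c) (ρ c d)) := fun a b c d =>
    ((hq'.rpow hα.le).le_mul_self_mul_max (NNReal.one_le_rpow (by exact hK) hα.le) a b c d).trans
      (by gcongr)
  obtain ⟨d, hd0, hdcomm, hdtri, hdρ⟩ :=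
    exists_pseudometric_of_le_two_mul_max ρ (fun x => (hρ_eq_zero x x).2 rfl) hρcomm hρ4
  have hdρ' : ∀ x y, q x y ^ α ≤ 2 * d x y ∧ d x y ≤ q x y ^ α := fun x y => by
    simpa only [hρ] using hdρ x y
  have hqα : ∀ x y, 0 ≤ q x y ^ α := fun x y => Real.rpow_nonneg (hq0 x y) α
  refine ⟨α, 2, d, hα, one_le_two, hd0, fun x y => ?_, hdcomm, hdtri, fun x y => ?_⟩
  · rw [← hqeq, ← Real.rpow_eq_zero (hq0 x y) hα.ne']
    constructor <;> intro h <;> linarith [hdρ' x y, hd0 x y, hqα x y]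
  · constructor <;> linarith [hdρ' x y, hqα x y]
end

section
/- Let δ > 0 and let V be a maximal δ-separated set in a doubling metric space (S,d). Then there exist numbers r_x ∈ [1,2) for x ∈ V such that, setting B_x := B(x, r_x·δ), for all x,y ∈ V either B_x ∩ B_y ≠ ∅ or dist(B_x, B_y) ≥ C·δ, where C > 0 depends only on the doubling constant of (S,d). -/
universe u

/-- A metric space is doubling with constant `N`: every open ball of radius `r > 0` can be
covered by at most `N` open balls of radius `r/2`. -/
def DoublingWith (S : Type*) [MetricSpace S] (N : ℕ) : Prop :=
  ∀ (x : S) (r : ℝ), 0 < r →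
    ∃ F : Finset S, F.card ≤ N ∧ Metric.ball x r ⊆ ⋃ y ∈ F, Metric.ball y (r / 2)

/-- The pairwise condition: balls either meet, or are `C·δ` separated. -/
def PairCond {S : Type u} [MetricSpace S] (C δ : ℝ) (x : S) (t : ℝ) (y : S) (u : ℝ) : Prop :=
  (Metric.ball x (t * δ) ∩ Metric.ball y (u * δ)).Nonempty ∨
  ∀ a ∈ Metric.ball x (t * δ), ∀ b ∈ Metric.ball y (u * δ), C * δ ≤ dist a b

lemma PairCond.symm {S : Type u} [MetricSpace S] {C δ : ℝ} {x y : S} {t u : ℝ}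
    (h : PairCond C δ x t y u) : PairCond C δ y u x t := by
  rcases h with ⟨z, hz1, hz2⟩ | h
  · exact Or.inl ⟨z, hz2, hz1⟩
  · exact Or.inr fun b hb a ha => by rw [dist_comm]; exact h a ha b hb

/-- Two radii which are both "bad" for the same pair are within `C` of each other. -/
lemma bad_close {S : Type u} [MetricSpace S] {C δ : ℝ} (hδ : 0 < δ) {x y : S} {t₁ t₂ u : ℝ}
    (h₁ : ¬ PairCond C δ x t₁ y u) (h₂ : ¬ PairCond C δ x t₂ y u) : t₁ < t₂ + C := by
  rw [PairCond, not_or] at h₁ h₂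
  push_neg at h₂
  obtain ⟨a, ha, b, hb, hab⟩ := h₂.2
  have hbx : ¬ b ∈ Metric.ball x (t₁ * δ) := fun hbx => h₁.1 ⟨b, hbx, hb⟩
  rw [Metric.mem_ball] at hbx ha
  push_neg at hbx
  have : dist b x ≤ dist a b + dist a x := by
    rw [dist_comm a b]; exact dist_triangle b a x
  nlinarith [ha, hab, hbx]

/-- Iterated doubling: cover a ball by `N^k` balls of radius `r/2^k`. -/
lemma doubling_iter {S : Type u} [MetricSpace S] {N : ℕ} (hN : DoublingWith S N)
    (x : S) (r : ℝ) (hr : 0 < r) (k : ℕ) :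
    ∃ F : Finset S, F.card ≤ N ^ k ∧ Metric.ball x r ⊆ ⋃ y ∈ F, Metric.ball y (r / 2 ^ k) := by
  classical
  induction k with
  | zero => exact ⟨{x}, by simp, by simp⟩
  | succ k ih =>
    obtain ⟨F, hcard, hcov⟩ := ih
    choose G hGcard hGcov using fun y : S => hN y (r / 2 ^ k) (by positivity)
    refine ⟨F.biUnion G, ?_, ?_⟩
    · calc (F.biUnion G).card ≤ ∑ y ∈ F, (G y).card := Finset.card_biUnion_le
        _ ≤ ∑ _y ∈ F, N := Finset.sum_le_sum (fun y _ => hGcard y)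
        _ = F.card * N := by simp [Finset.sum_const, mul_comm]
        _ ≤ N ^ k * N := Nat.mul_le_mul_right _ hcard
        _ = N ^ (k + 1) := by ring
    · intro z hz
      have hz2 := hcov hz
      simp only [Set.mem_iUnion] at hz2 ⊢
      obtain ⟨y, hy, hzy⟩ := hz2
      have hz3 := hGcov y hzy
      simp only [Set.mem_iUnion] at hz3
      obtain ⟨w, hw, hzw⟩ := hz3
      refine ⟨w, Finset.mem_biUnion.2 ⟨y, hy, hw⟩, ?_⟩
      have : r / 2 ^ k / 2 = r / 2 ^ (k + 1) := by ring
      rwa [this] at hzw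

/-- A `δ`-separated set meets any ball of radius `8δ` in at most `N^4` points. -/
lemma sep_finite {S : Type u} [MetricSpace S] {N : ℕ} (hN : DoublingWith S N)
    {δ : ℝ} (hδ : 0 < δ) {V : Set S} (hsep : V.Pairwise fun x y => δ ≤ dist x y) (x : S) :
    (V ∩ Metric.ball x (8 * δ)).Finite ∧ (V ∩ Metric.ball x (8 * δ)).ncard ≤ N ^ 4 := by
  classical
  obtain ⟨F, hFc, hFcov⟩ := doubling_iter hN x (8 * δ) (by positivity) 4
  have hrad : 8 * δ / 2 ^ 4 = δ / 2 := by ring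
  rw [hrad] at hFcov
  set A := V ∩ Metric.ball x (8 * δ) with hA
  have hsel : ∀ v ∈ A, ∃ c ∈ F, v ∈ Metric.ball c (δ / 2) := by
    intro v hv
    have := hFcov hv.2
    simpa using this
  choose! f hf1 hf2 using hsel
  have hinj : A.InjOn f := by
    intro v hv w hw hfe
    by_contra hne
    have hsepvw : δ ≤ dist v w := hsep hv.1 hw.1 hne
    have h1 : dist v (f v) < δ / 2 := Metric.mem_ball.1 (hf2 v hv)
    have h2 : dist w (f w) < δ / 2 := Metric.mem_ball.1 (hf2 w hw)
    have : dist v w ≤ dist v (f v) + dist (f w) w := by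
      rw [hfe]; exact dist_triangle v (f w) w
    rw [dist_comm (f w) w] at this
    linarith
  have himg : f '' A ⊆ (F : Set S) := by
    rintro _ ⟨v, hv, rfl⟩; exact hf1 v hv
  have hfin : A.Finite :=
    Set.Finite.of_finite_image (F.finite_toSet.subset himg) hinj
  refine ⟨hfin, ?_⟩
  calc A.ncard = (f '' A).ncard := (Set.ncard_image_of_injOn hinj).symm
    _ ≤ (F : Set S).ncard := Set.ncard_le_ncard himg F.finite_toSet
    _ = F.card := Set.ncard_coe_finset F
    _ ≤ N ^ 4 := hFc

/-- The key selection step: given fixed radii for the "previous" points, one can choose a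
good radius for `x` from a fixed finite list of candidates. -/
lemma exists_good {S : Type u} [MetricSpace S] {N : ℕ} (hN : DoublingWith S N)
    {δ : ℝ} (hδ : 0 < δ) {V : Set S} (hsep : V.Pairwise fun x y => δ ≤ dist x y)
    (x : S) (P : S → Prop) (q : S → ℝ) (hq : ∀ y, 1 ≤ q y ∧ q y < 2) :
    ∃ t, (1 ≤ t ∧ t < 2) ∧
      ∀ y, P y → y ∈ V → PairCond ((2 * (N : ℝ) ^ 4 + 2)⁻¹) δ x t y (q y) := by
  classical
  set C : ℝ := (2 * (N : ℝ) ^ 4 + 2)⁻¹ with hC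
  have hNpos : (0 : ℝ) ≤ (N : ℝ) ^ 4 := by positivity
  have hCpos : 0 < C := by rw [hC]; positivity
  set m : ℕ := 2 * N ^ 4 + 1 with hm
  have hmpos : 0 < (m : ℝ) := by positivity
  have hcast : (m : ℝ) = 2 * (N : ℝ) ^ 4 + 1 := by rw [hm]; push_cast; ring
  have hCm : C < 1 / (m : ℝ) := by
    rw [hC, ← one_div]
    apply one_div_lt_one_div_of_lt hmpos
    rw [hcast]; linarith
  have hpos2 : (0:ℝ) < 2 * (N : ℝ) ^ 4 + 2 := by positivity
  have hmul : C * (2 * (N : ℝ) ^ 4 + 2) = 1 := by rw [hC]; field_simp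
  have hChalf : C ≤ 1 / 2 := by nlinarith [mul_nonneg hCpos.le hNpos]
  -- candidates
  set cand : Finset ℝ := (Finset.range m).image (fun k : ℕ => 1 + (k : ℝ) / m) with hcand
  have hcandmem : ∀ t ∈ cand, 1 ≤ t ∧ t < 2 := by
    intro t ht
    obtain ⟨k, hk, rfl⟩ := Finset.mem_image.1 ht
    have hk' : (k : ℝ) < m := by exact_mod_cast Finset.mem_range.1 hk
    constructor
    · have : (0:ℝ) ≤ (k : ℝ) / m := by positivity
      linarith
    · have : (k : ℝ) / m < 1 := (div_lt_one hmpos).2 hk'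
      linarith
  have hcandcard : cand.card = m := by
    rw [hcand, Finset.card_image_of_injOn, Finset.card_range]
    intro a _ b _ hab
    have : (a : ℝ) / m = (b : ℝ) / m := by linarith
    have : (a : ℝ) = b := by
      field_simp at this; exact_mod_cast this
    exact_mod_cast this
  -- neighbours
  obtain ⟨hfin, hcardA⟩ := sep_finite hN hδ hsep x
  set T : Finset S := hfin.toFinset with hT
  have hTcard : T.card ≤ N ^ 4 := by
    rw [hT]
    rw [← Set.ncard_eq_toFinset_card _ hfin]
    exact hcardA
  -- bad candidates
  set Good : ℝ → Prop := fun t => ∀ y, P y → y ∈ V → PairCond C δ x t y (q y) with hGood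
  set bad : Finset ℝ := cand.filter (fun t => ¬ Good t) with hbad
  have hwit : ∀ t ∈ bad, ∃ y, y ∈ T ∧ P y ∧ y ∈ V ∧ ¬ PairCond C δ x t y (q y) := by
    intro t ht
    obtain ⟨htc, hng⟩ := Finset.mem_filter.1 ht
    have hng' : ∃ y, P y ∧ y ∈ V ∧ ¬ PairCond C δ x t y (q y) := by
      by_contra hall
      push_neg at hall
      exact hng fun y hPy hyV => hall y hPy hyV
    obtain ⟨y, hPy, hyV, hnp⟩ := hng'
    obtain ⟨ht1, ht2⟩ := hcandmem t htc
    refine ⟨y, ?_, hPy, hyV, hnp⟩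
    rw [hT, Set.Finite.mem_toFinset]
    refine ⟨hyV, ?_⟩
    by_contra hfar
    rw [Metric.mem_ball] at hfar
    push_neg at hfar
    apply hnp
    right
    intro a ha b hb
    rw [Metric.mem_ball] at ha hb
    have h1 := (hq y).2
    have hxy : dist x y ≤ dist a x + dist a b + dist b y := by
      calc dist x y ≤ dist x a + dist a y := dist_triangle x a y
        _ ≤ dist x a + (dist a b + dist b y) := by linarith [dist_triangle a b y]
        _ = dist a x + dist a b + dist b y := by rw [dist_comm x a]; ring
    have h2 : dist y x < 8 * δ → False := fun h => absurd h (not_lt.2 hfar)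
    have h3 : 8 * δ ≤ dist x y := by rw [dist_comm]; exact hfar
    have hCδ : C * δ ≤ δ / 2 := by nlinarith
    nlinarith [ha, hb, h1]
  -- witness map is injective on bad candidates
  set f : ℝ → S := fun t =>
    if h : ∃ y, y ∈ T ∧ P y ∧ y ∈ V ∧ ¬ PairCond C δ x t y (q y) then h.choose else x with hf
  have hfT : ∀ t ∈ bad, f t ∈ T := by
    intro t ht
    rw [hf]
    simp only
    rw [dif_pos (hwit t ht)]
    exact (hwit t ht).choose_spec.1
  have hfbad : ∀ t ∈ bad, ¬ PairCond C δ x t (f t) (q (f t)) := by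
    intro t ht
    rw [hf]
    simp only
    rw [dif_pos (hwit t ht)]
    exact (hwit t ht).choose_spec.2.2.2
  have hinj : Set.InjOn f bad := by
    intro t₁ ht₁ t₂ ht₂ hfe
    by_contra hne
    have h₁ := hfbad t₁ ht₁
    have h₂ := hfbad t₂ ht₂
    rw [hfe] at h₁
    have hlt1 : t₁ < t₂ + C := bad_close hδ h₁ h₂
    have hlt2 : t₂ < t₁ + C := bad_close hδ h₂ h₁
    -- but distinct candidates differ by at least 1/m
    have hc₁ := (Finset.mem_filter.1 ht₁).1
    have hc₂ := (Finset.mem_filter.1 ht₂).1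
    obtain ⟨k₁, hk₁, rfl⟩ := Finset.mem_image.1 hc₁
    obtain ⟨k₂, hk₂, rfl⟩ := Finset.mem_image.1 hc₂
    have hkne : k₁ ≠ k₂ := by
      intro h; apply hne; rw [h]
    rcases Nat.lt_or_ge k₁ k₂ with h | h
    · have : (k₁ : ℝ) + 1 ≤ k₂ := by exact_mod_cast h
      have hd : 1 / (m : ℝ) ≤ (k₂ : ℝ) / m - (k₁ : ℝ) / m := by
        rw [div_sub_div_same]
        gcongr
        linarith
      linarith
    · have h' : k₂ < k₁ := lt_of_le_of_ne h (Ne.symm hkne)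
      have : (k₂ : ℝ) + 1 ≤ k₁ := by exact_mod_cast h'
      have hd : 1 / (m : ℝ) ≤ (k₁ : ℝ) / m - (k₂ : ℝ) / m := by
        rw [div_sub_div_same]
        gcongr
        linarith
      linarith
  have hbadcard : bad.card ≤ N ^ 4 :=
    le_trans (Finset.card_le_card_of_injOn f hfT hinj) hTcard
  have hlt : bad.card < cand.card := by
    rw [hcandcard, hm]; omega
  have hsub : bad ⊆ cand := Finset.filter_subset _ _
  have hne : (cand \ bad).Nonempty := by
    rw [← Finset.card_pos, Finset.card_sdiff_of_subset hsub]
    omega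
  obtain ⟨t, ht⟩ := hne
  obtain ⟨htc, htb⟩ := Finset.mem_sdiff.1 ht
  refine ⟨t, hcandmem t htc, ?_⟩
  have : Good t := by
    by_contra hng
    exact htb (Finset.mem_filter.2 ⟨htc, hng⟩)
  exact this

/-- For a maximal `δ`-separated set `V` in a doubling metric space, one can choose radii
`r_x ∈ [1,2)` so that any two of the balls `B_x = B(x, r_x·δ)`, `x ∈ V`, either intersect
or are at distance at least `C·δ`, with `C > 0` depending only on the doubling constant. -/
theorem stmt2 (N : ℕ) :
    ∃ C : ℝ, 0 < C ∧
      ∀ (S : Type u) [inst : MetricSpace S], DoublingWith S N →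
        ∀ δ : ℝ, 0 < δ → ∀ V : Set S,
          (V.Pairwise fun x y => δ ≤ dist x y) →
          (∀ z : S, ∃ x ∈ V, dist z x < δ) →
          ∃ r : S → ℝ, (∀ x ∈ V, 1 ≤ r x ∧ r x < 2) ∧
            ∀ x ∈ V, ∀ y ∈ V,
              (Metric.ball x (r x * δ) ∩ Metric.ball y (r y * δ)).Nonempty ∨
              ∀ a ∈ Metric.ball x (r x * δ), ∀ b ∈ Metric.ball y (r y * δ),
                C * δ ≤ dist a b := by
  classical
  refine ⟨(2 * (N : ℝ) ^ 4 + 2)⁻¹, by positivity, ?_⟩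
  intro S inst hN δ hδ V hsep _hmax
  set C : ℝ := (2 * (N : ℝ) ^ 4 + 2)⁻¹ with hC
  obtain ⟨lo, hwo⟩ := exists_wellOrder S
  letI := lo
  have wf : WellFounded (· < · : S → S → Prop) := hwo.wf
  set step : ∀ x : S, (∀ y : S, y < x → ℝ) → ℝ := fun x prev =>
    if h : ∃ t, (1 ≤ t ∧ t < 2) ∧
        ∀ y, ∀ hy : y < x, y ∈ V → PairCond C δ x t y (prev y hy)
    then h.choose else 1 with hstep
  set ρ : S → ℝ := wf.fix step with hρ
  have hfix : ∀ x, ρ x = step x (fun y _ => ρ y) := fun x => wf.fix_eq step x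
  have hbound : ∀ x, 1 ≤ ρ x ∧ ρ x < 2 := by
    intro x
    rw [hfix x, hstep]
    simp only
    split_ifs with h
    · exact h.choose_spec.1
    · norm_num
  have hgood : ∀ x, ∀ y, y < x → y ∈ V → PairCond C δ x (ρ x) y (ρ y) := by
    intro x
    have hex : ∃ t, (1 ≤ t ∧ t < 2) ∧
        ∀ y, ∀ _hy : y < x, y ∈ V → PairCond C δ x t y (ρ y) := by
      obtain ⟨t, ht1, ht2⟩ := exists_good hN hδ hsep x (fun y => y < x) ρ hbound
      exact ⟨t, ht1, fun y hy hyV => ht2 y hy hyV⟩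
    have : ρ x = step x (fun y _ => ρ y) := hfix x
    rw [this, hstep]
    simp only
    rw [dif_pos hex]
    exact hex.choose_spec.2
  refine ⟨ρ, fun x _ => hbound x, ?_⟩
  intro x hx y hy
  rcases eq_or_ne x y with rfl | hne
  · left
    refine ⟨x, ?_, ?_⟩ <;>
    · rw [Metric.mem_ball, dist_self]
      have := (hbound x).1
      nlinarith
  · rcases lt_or_gt_of_ne hne with h | h
    · exact (hgood y x h hx).symm
    · exact hgood x y h hy
end

section
/- Let (S,d) be a bounded metric space admitting a visual approximation {Xⁿ} with visual parameter Λ > 1, i.e., there is C ≥ 1 with (1/C)Λ^{-n} ≤ diam(X) ≤ CΛ^{-n} for all n and X ∈ Xⁿ, where each Xⁿ covers S. Then (S,d) is uniformly perfect: there is λ ∈ (0,1) such that for all x ∈ S and 0 < r ≤ diam(S), B(x,r) \ closure(B(x, λr)) is nonempty. -/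
/-- If a bounded metric space admits a visual approximation (a sequence of covers `Xⁿ`,
with `X⁰ = {S}`, all of whose `n`-tiles have diameter comparable to `Λ^{-n}`), then the
space is uniformly perfect. -/
theorem stmt4 (S : Type*) [MetricSpace S]
    (hb : Bornology.IsBounded (Set.univ : Set S))
    (X : ℕ → Set (Set S))
    (hcov : ∀ n, ⋃₀ X n = Set.univ)
    (hX0 : X 0 = {Set.univ})
    (Λ C : ℝ) (hΛ : 1 < Λ) (hC : 1 ≤ C)
    (hdiam : ∀ n : ℕ, ∀ A ∈ X n,
      Λ ^ (-(n : ℤ)) / C ≤ Metric.diam A ∧ Metric.diam A ≤ C * Λ ^ (-(n : ℤ))) :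
    ∃ lam : ℝ, 0 < lam ∧ lam < 1 ∧
      ∀ (x : S) (r : ℝ), 0 < r → r ≤ Metric.diam (Set.univ : Set S) →
        (Metric.ball x r \ closure (Metric.ball x (lam * r))).Nonempty := by
  have hΛ0 : (0:ℝ) < Λ := lt_trans one_pos hΛ
  have hC0 : (0:ℝ) < C := lt_of_lt_of_le one_pos hC
  refine ⟨1 / (4 * C^2 * Λ), by positivity, ?_, ?_⟩
  · rw [div_lt_one (by positivity)]
    nlinarith [sq_nonneg (C - 1)]
  intro x r hr hrD
  have hDC : Metric.diam (Set.univ : Set S) ≤ C := by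
    have := (hdiam 0 Set.univ (by rw [hX0]; rfl)).2
    simpa using this
  have hpow : ∀ n : ℕ, Λ ^ (-(n:ℤ)) = (Λ⁻¹) ^ n := by
    intro n; rw [zpow_neg, zpow_natCast, inv_pow]
  have hpowpos : ∀ n : ℕ, (0:ℝ) < Λ ^ (-(n:ℤ)) := fun n => zpow_pos hΛ0 _
  have hex : ∃ n : ℕ, C * Λ ^ (-(n:ℤ)) < r := by
    obtain ⟨n, hn⟩ := exists_pow_lt_of_lt_one (div_pos hr hC0)
      (inv_lt_one_of_one_lt₀ hΛ)
    refine ⟨n, ?_⟩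
    rw [hpow]
    have := mul_lt_mul_of_pos_left hn hC0
    rw [mul_div_cancel₀ r (ne_of_gt hC0)] at this
    exact this
  set n := Nat.find hex with hn_def
  have hn : C * Λ ^ (-(n:ℤ)) < r := Nat.find_spec hex
  have hn0 : n ≠ 0 := by
    intro h
    have := hn
    rw [h] at this
    simp at this
    linarith [le_trans hrD hDC]
  have hprev : r ≤ C * Λ ^ (-((n-1 : ℕ):ℤ)) := by
    have := Nat.find_min hex (Nat.sub_lt (Nat.pos_of_ne_zero hn0) one_pos)
    linarith [not_lt.mp this]
  -- Λ^{-n} ≥ r / (C * Λ)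
  have hlow : r / (C * Λ) ≤ Λ ^ (-(n:ℤ)) := by
    have hsucc : n = (n-1) + 1 := (Nat.succ_pred_eq_of_pos (Nat.pos_of_ne_zero hn0)).symm
    have : Λ ^ (-(n:ℤ)) = Λ ^ (-((n-1:ℕ):ℤ)) / Λ := by
      rw [hsucc]
      push_cast
      rw [neg_add, zpow_add₀ (ne_of_gt hΛ0)]
      field_simp
    rw [this, div_le_div_iff₀ (by positivity) hΛ0]
    calc r * Λ ≤ C * Λ ^ (-((n-1:ℕ):ℤ)) * Λ := by
          exact mul_le_mul_of_nonneg_right hprev (le_of_lt hΛ0)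
      _ = Λ ^ (-((n-1:ℕ):ℤ)) * (C * Λ) := by ring
  -- tile containing x
  have hx : x ∈ ⋃₀ X n := by rw [hcov]; trivial
  obtain ⟨A, hA, hxA⟩ := hx
  obtain ⟨hAlo, hAhi⟩ := hdiam n A hA
  have hApos : 0 < Metric.diam A :=
    lt_of_lt_of_le (div_pos (hpowpos n) hC0) hAlo
  have hAbdd : Bornology.IsBounded A := hb.subset (Set.subset_univ A)
  -- find y ∈ A far from x
  have hfar : ∃ y ∈ A, Metric.diam A / 3 ≤ dist x y := by
    by_contra h
    push_neg at h
    have hle : Metric.diam A ≤ 2 * (Metric.diam A / 3) := by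
      apply Metric.diam_le_of_forall_dist_le (by linarith)
      intro y hy z hz
      calc dist y z ≤ dist y x + dist x z := dist_triangle _ _ _
        _ ≤ 2 * (Metric.diam A / 3) := by
            rw [dist_comm y x]
            linarith [le_of_lt (h y hy), le_of_lt (h z hz)]
    linarith
  obtain ⟨y, hyA, hfary⟩ := hfar
  refine ⟨y, ?_, ?_⟩
  · rw [Metric.mem_ball, dist_comm]
    calc dist x y ≤ Metric.diam A := Metric.dist_le_diam_of_mem hAbdd hxA hyA
      _ ≤ C * Λ ^ (-(n:ℤ)) := hAhi
      _ < r := hn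
  · intro hmem
    have := Metric.closure_ball_subset_closedBall hmem
    rw [Metric.mem_closedBall, dist_comm] at this
    -- this : dist x y ≤ (1/(4C²Λ)) * r
    have hkey : r / (3 * C^2 * Λ) ≤ dist x y := by
      calc r / (3 * C^2 * Λ) = (r / (C * Λ)) / C / 3 := by ring
        _ ≤ Λ ^ (-(n:ℤ)) / C / 3 := by gcongr
        _ ≤ Metric.diam A / 3 := by gcongr
        _ ≤ dist x y := hfary
    have hlt : 1 / (4 * C^2 * Λ) * r < r / (3 * C^2 * Λ) := by
      rw [one_div_mul_eq_div]
      apply div_lt_div_of_pos_left hr (by positivity)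
      nlinarith [sq_nonneg C]
    linarith
end

section
/- Let {Xⁿ} be a quasi-visual approximation of width w of a bounded metric space (S,d). Then there is a constant C ≥ 1 such that for all distinct x,y ∈ S and every m-tile X^m ∈ X^m containing x, where m = m_w(x,y), we have (1/C)·diam(X^m) ≤ d(x,y) ≤ C·diam(X^m). -/
open Metric Set

variable {S : Type*}

/-- A chain of tiles in a cover `T`: consecutive tiles intersect. -/
def TileChain (T : Set (Set S)) (A B : Set S) (k : ℕ) : Prop :=
  ∃ c : ℕ → Set S, c 0 = A ∧ c k = B ∧ (∀ i, i ≤ k → c i ∈ T) ∧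
    ∀ i, i < k → (c i ∩ c (i + 1)).Nonempty

/-- The width-`w` neighborhood `U_w(A)` of a tile `A` in a cover `T`. -/
def Uw (T : Set (Set S)) (w : ℕ) (A : Set S) : Set S :=
  ⋃₀ {B | B ∈ T ∧ ∃ k, k ≤ w ∧ TileChain T A B k}

/-- The `U_w`-proximity function associated with a sequence of covers. -/
noncomputable def prox (X : ℕ → Set (Set S)) (w : ℕ) (x y : S) : ℕ∞ :=
  ⨆ n ∈ {n : ℕ | ∃ A ∈ X n, ∃ B ∈ X n, x ∈ A ∧ y ∈ B ∧
    (Uw (X n) w A ∩ Uw (X n) w B).Nonempty}, (n : ℕ∞)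

/-- `{Xⁿ}` is a quasi-visual approximation of width `w` of the metric space `S`. -/
def IsQVA [MetricSpace S] (X : ℕ → Set (Set S)) (w : ℕ) : Prop :=
  (∀ n, ⋃₀ X n = Set.univ) ∧ X 0 = {Set.univ} ∧
  (∃ C : ℝ, 1 ≤ C ∧
    (∀ n, ∀ A ∈ X n, ∀ B ∈ X n, (A ∩ B).Nonempty →
      Metric.diam A ≤ C * Metric.diam B) ∧
    (∀ n, ∀ A ∈ X n, ∀ B ∈ X n, Uw (X n) w A ∩ Uw (X n) w B = ∅ →
      ∀ a ∈ A, ∀ b ∈ B, Metric.diam A ≤ C * dist a b) ∧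
    (∀ n, ∀ A ∈ X n, ∀ B ∈ X (n + 1), (A ∩ B).Nonempty →
      Metric.diam A ≤ C * Metric.diam B ∧ Metric.diam B ≤ C * Metric.diam A)) ∧
  (∃ (k₀ : ℕ) (lam : ℝ), 0 < k₀ ∧ 0 < lam ∧ lam < 1 ∧
    ∀ n, ∀ A ∈ X n, ∀ B ∈ X (n + k₀), (A ∩ B).Nonempty →
      Metric.diam B ≤ lam * Metric.diam A)

/-! If the `U_w`-neighbourhoods of `m`-tiles `A ∋ x` and `B ∋ y` meet, then `x` and `y` are joined
through two chains of at most `w` intersecting `m`-tiles; along a chain diameters change by a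
bounded factor at each step, so `d(x,y) ≲ diam A`. If instead the neighbourhoods of the
`(m+1)`-tiles at `x` and `y` are disjoint, separation gives `d(x,y) ≳ diam` of the `(m+1)`-tile at
`x`, which is comparable to `diam A`. For `m = m_w(x,y)` both situations occur. -/

section TileChain

variable {T : Set (Set S)} {A B : Set S} {k : ℕ}

lemma TileChain.refl (hA : A ∈ T) : TileChain T A A 0 :=
  ⟨fun _ => A, rfl, rfl, fun _ _ => hA, fun _ h => absurd h (Nat.not_lt_zero _)⟩

lemma TileChain.eq_of_zero (h : TileChain T A B 0) : A = B := by
  obtain ⟨c, rfl, rfl, -⟩ := h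
  rfl

lemma TileChain.exists_prev (h : TileChain T A B (k + 1)) :
    ∃ B' ∈ T, TileChain T A B' k ∧ B ∈ T ∧ (B' ∩ B).Nonempty := by
  obtain ⟨c, hc0, hck, hmem, hint⟩ := h
  exact ⟨c k, hmem k (by omega), ⟨c, hc0, rfl, fun i hi => hmem i (by omega),
    fun i hi => hint i (by omega)⟩, hck ▸ hmem (k + 1) le_rfl, hck ▸ hint k k.lt_succ_self⟩

variable [PseudoMetricSpace S] {K : ℝ}

def DiamComparable (T : Set (Set S)) (K : ℝ) : Prop :=
  ∀ A ∈ T, ∀ B ∈ T, (A ∩ B).Nonempty → diam A ≤ K * diam B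

lemma TileChain.diam_le (hK : 1 ≤ K)
    (hT : DiamComparable T K)
    (h : TileChain T A B k) : diam B ≤ K ^ k * diam A ∧ diam A ≤ K ^ k * diam B := by
  induction k generalizing B with
  | zero => simp [h.eq_of_zero]
  | succ k ih =>
    obtain ⟨B', hB', hAB', hB, hint⟩ := h.exists_prev
    obtain ⟨ih₁, ih₂⟩ := ih hAB'
    constructor
    · calc diam B ≤ K * diam B' := hT B hB B' hB' (inter_comm B' B ▸ hint)
        _ ≤ K * (K ^ k * diam A) := by gcongr
        _ = K ^ (k + 1) * diam A := by ring
    · calc diam A ≤ K ^ k * diam B' := ih₂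
        _ ≤ K ^ k * (K * diam B) := by gcongr; exact hT B' hB' B hB hint
        _ = K ^ (k + 1) * diam B := by ring

lemma TileChain.dist_le [BoundedSpace S] (hK : 1 ≤ K)
    (hT : DiamComparable T K)
    (h : TileChain T A B k) {x p : S} (hx : x ∈ A) (hp : p ∈ B) :
    dist x p ≤ (k + 1) * K ^ k * diam A := by
  induction k generalizing B p with
  | zero =>
    rw [← h.eq_of_zero] at hp
    simpa using dist_le_diam_of_mem (Bornology.IsBounded.all A) hx hp
  | succ k ih =>
    obtain ⟨B', -, hAB', -, q, hqB', hqB⟩ := h.exists_prev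
    have hKk : K ^ k ≤ K ^ (k + 1) := pow_le_pow_right₀ hK k.le_succ
    calc dist x p ≤ dist x q + dist q p := dist_triangle x q p
      _ ≤ (k + 1) * K ^ k * diam A + K ^ (k + 1) * diam A := by
        gcongr
        · exact ih hAB' hqB'
        · exact (dist_le_diam_of_mem (Bornology.IsBounded.all B) hqB hp).trans (h.diam_le hK hT).1
      _ ≤ (k + 1) * K ^ (k + 1) * diam A + K ^ (k + 1) * diam A := by gcongr
      _ = ((k + 1 : ℕ) + 1) * K ^ (k + 1) * diam A := by push_cast; ring

end TileChain

section Uw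

lemma subset_Uw {T : Set (Set S)} {A : Set S} (hA : A ∈ T) (w : ℕ) : A ⊆ Uw T w A :=
  subset_sUnion_of_mem ⟨hA, 0, w.zero_le, .refl hA⟩

variable [PseudoMetricSpace S] {T : Set (Set S)} {K : ℝ} {w : ℕ} {A B : Set S}

lemma dist_le_of_mem_Uw [BoundedSpace S] (hK : 1 ≤ K)
    (hT : DiamComparable T K)
    {x p : S} (hx : x ∈ A) (hp : p ∈ Uw T w A) : dist x p ≤ (w + 1) * K ^ w * diam A := by
  obtain ⟨D, ⟨-, k, hkw, hAD⟩, hpD⟩ := hp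
  calc dist x p ≤ (k + 1) * K ^ k * diam A := hAD.dist_le hK hT hx hpD
    _ ≤ (w + 1) * K ^ w * diam A := by gcongr

lemma diam_le_of_Uw_inter_nonempty (hK : 1 ≤ K)
    (hT : DiamComparable T K)
    (hAB : (Uw T w A ∩ Uw T w B).Nonempty) : diam B ≤ K ^ (2 * w + 1) * diam A := by
  obtain ⟨p, ⟨D, ⟨hD, k, hkw, hAD⟩, hpD⟩, ⟨E, ⟨hE, l, hlw, hBE⟩, hpE⟩⟩ := hAB
  calc diam B ≤ K ^ l * diam E := (hBE.diam_le hK hT).2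
    _ ≤ K ^ l * (K * diam D) := by gcongr; exact hT E hE D hD ⟨p, hpE, hpD⟩
    _ ≤ K ^ l * (K * (K ^ k * diam A)) := by gcongr; exact (hAD.diam_le hK hT).1
    _ = K ^ (l + 1 + k) * diam A := by ring
    _ ≤ K ^ (2 * w + 1) * diam A :=
      mul_le_mul_of_nonneg_right (pow_le_pow_right₀ hK (by omega)) diam_nonneg

lemma dist_le_of_Uw_inter_nonempty [BoundedSpace S] (hK : 1 ≤ K)
    (hT : DiamComparable T K)
    (hAB : (Uw T w A ∩ Uw T w B).Nonempty) {x y : S} (hx : x ∈ A) (hy : y ∈ B) :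
    dist x y ≤ 2 * (w + 1) * K ^ (3 * w + 1) * diam A := by
  obtain ⟨p, hpA, hpB⟩ := hAB
  have hKw : K ^ w ≤ K ^ (3 * w + 1) := pow_le_pow_right₀ hK (by omega)
  calc dist x y ≤ dist x p + dist y p := dist_triangle_right x y p
    _ ≤ (w + 1) * K ^ w * diam A + (w + 1) * K ^ w * (K ^ (2 * w + 1) * diam A) := by
      gcongr
      · exact dist_le_of_mem_Uw hK hT hx hpA
      · exact (dist_le_of_mem_Uw hK hT hy hpB).trans
          (by gcongr; exact diam_le_of_Uw_inter_nonempty hK hT ⟨p, hpA, hpB⟩)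
    _ = (w + 1) * K ^ w * diam A + (w + 1) * K ^ (3 * w + 1) * diam A := by ring
    _ ≤ 2 * (w + 1) * K ^ (3 * w + 1) * diam A := by
      have : K ^ w * diam A ≤ K ^ (3 * w + 1) * diam A := by gcongr
      nlinarith

end Uw

lemma mem_and_le_of_biSup_natCast_eq {s : Set ℕ} (hs : s.Nonempty) {m : ℕ}
    (h : ⨆ n ∈ s, (n : ℕ∞) = m) : m ∈ s ∧ ∀ n ∈ s, n ≤ m := by
  have hle : ∀ n ∈ s, n ≤ m := fun n hn => by
    exact_mod_cast h ▸ le_biSup (fun n : ℕ => (n : ℕ∞)) hn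
  have hsup : sSup s = m := by exact_mod_cast (ENat.natCast_sSup ⟨m, hle⟩).trans h
  exact ⟨hsup ▸ Nat.sSup_mem hs ⟨m, hle⟩, hle⟩

section prox

variable (X : ℕ → Set (Set S)) (w : ℕ) (x y : S)

def proxIndices : Set ℕ :=
  {n | ∃ A ∈ X n, ∃ B ∈ X n, x ∈ A ∧ y ∈ B ∧ (Uw (X n) w A ∩ Uw (X n) w B).Nonempty}

variable {X w x y}

lemma zero_mem_proxIndices (hX0 : X 0 = {univ}) : 0 ∈ proxIndices X w x y := by
  have huniv : univ ∈ X 0 := hX0 ▸ rfl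
  exact ⟨univ, huniv, univ, huniv, trivial, trivial,
    x, subset_Uw huniv w trivial, subset_Uw huniv w trivial⟩

lemma mem_proxIndices_and_succ_not_mem_of_prox_eq (hX0 : X 0 = {univ}) {m : ℕ}
    (h : prox X w x y = m) :
    m ∈ proxIndices X w x y ∧ m + 1 ∉ proxIndices X w x y := by
  obtain ⟨hm, hle⟩ := mem_and_le_of_biSup_natCast_eq ⟨0, zero_mem_proxIndices hX0⟩ h
  exact ⟨hm, fun h' => (hle _ h').not_gt m.lt_succ_self⟩

variable [PseudoMetricSpace S] {K : ℝ} {m : ℕ} {A : Set S}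

lemma diam_le_of_succ_not_mem_proxIndices (hK : 0 ≤ K) (hcov : ⋃₀ X (m + 1) = univ)
    (hsep : ∀ A ∈ X (m + 1), ∀ B ∈ X (m + 1), Uw (X (m + 1)) w A ∩ Uw (X (m + 1)) w B = ∅ →
      ∀ a ∈ A, ∀ b ∈ B, diam A ≤ K * dist a b)
    (hnest : ∀ A ∈ X m, ∀ B ∈ X (m + 1), (A ∩ B).Nonempty → diam A ≤ K * diam B)
    (hm : m + 1 ∉ proxIndices X w x y) (hA : A ∈ X m) (hxA : x ∈ A) :
    diam A ≤ K ^ 2 * dist x y := by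
  obtain ⟨A', hA', hxA'⟩ := mem_sUnion.mp (hcov ▸ mem_univ x)
  obtain ⟨B', hB', hyB'⟩ := mem_sUnion.mp (hcov ▸ mem_univ y)
  have hdisj : Uw (X (m + 1)) w A' ∩ Uw (X (m + 1)) w B' = ∅ :=
    not_nonempty_iff_eq_empty.mp fun hne => hm ⟨A', hA', B', hB', hxA', hyB', hne⟩
  calc diam A ≤ K * diam A' := hnest A hA A' hA' ⟨x, hxA, hxA'⟩
    _ ≤ K * (K * dist x y) := by gcongr; exact hsep A' hA' B' hB' hdisj x hxA' y hyB'
    _ = K ^ 2 * dist x y := by ring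

lemma dist_le_of_mem_proxIndices [BoundedSpace S] (hK : 1 ≤ K)
    (hT : DiamComparable (X m) K)
    (hm : m ∈ proxIndices X w x y) (hA : A ∈ X m) (hxA : x ∈ A) :
    dist x y ≤ 2 * (w + 1) * K ^ (3 * w + 2) * diam A := by
  obtain ⟨A₀, hA₀, B₀, -, hxA₀, hyB₀, hUw⟩ := hm
  calc dist x y ≤ 2 * (w + 1) * K ^ (3 * w + 1) * diam A₀ :=
        dist_le_of_Uw_inter_nonempty hK hT hUw hxA₀ hyB₀
    _ ≤ 2 * (w + 1) * K ^ (3 * w + 1) * (K * diam A) := by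
        gcongr; exact hT A₀ hA₀ A hA ⟨x, hxA₀, hxA⟩
    _ = 2 * (w + 1) * K ^ (3 * w + 2) * diam A := by ring

end prox

/-- For a quasi-visual approximation of width `w` of a bounded metric space, there is a
constant `C ≥ 1` such that for all distinct `x, y ∈ S`, with `m = m_w(x,y)`, and any
`m`-tile `X^m` containing `x`, one has `(1/C)·diam(X^m) ≤ d(x,y) ≤ C·diam(X^m)`. -/
theorem stmt9 (S : Type*) [MetricSpace S]
    (hb : Bornology.IsBounded (Set.univ : Set S))
    (X : ℕ → Set (Set S)) (w : ℕ) (hqva : IsQVA X w) :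
    ∃ C : ℝ, 1 ≤ C ∧ ∀ x y : S, x ≠ y → ∀ m : ℕ, prox X w x y = (m : ℕ∞) →
      ∀ A ∈ X m, x ∈ A →
        Metric.diam A / C ≤ dist x y ∧ dist x y ≤ C * Metric.diam A := by
  have : BoundedSpace S := Bornology.isBounded_univ.mp hb
  obtain ⟨hcov, hX0, ⟨K, hK, hsame, hsep, hnext⟩, -⟩ := hqva
  have hKsq : K ^ 2 ≤ 2 * (w + 1) * K ^ (3 * w + 2) := calc
    K ^ 2 ≤ K ^ (3 * w + 2) := pow_le_pow_right₀ hK (by omega)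
    _ ≤ 2 * (w + 1) * K ^ (3 * w + 2) := le_mul_of_one_le_left (by positivity) (by linarith)
  refine ⟨2 * (w + 1) * K ^ (3 * w + 2), (one_le_pow₀ hK).trans hKsq, ?_⟩
  intro x y _ m hm A hA hxA
  obtain ⟨hmem, hsucc⟩ := mem_proxIndices_and_succ_not_mem_of_prox_eq hX0 hm
  constructor
  · rw [div_le_iff₀' (by positivity)]
    calc diam A ≤ K ^ 2 * dist x y := diam_le_of_succ_not_mem_proxIndices (by linarith)
          (hcov _) (hsep _) (fun A hA B hB h => (hnext m A hA B hB h).1) hsucc hA hxA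
      _ ≤ _ := by gcongr
  · exact dist_le_of_mem_proxIndices hK (hsame m) hmem hA hxA
end
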